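/- Let B ≥ 2 and let (W_b, L_b, Z_b, K_b) for b ∈ {1,…,B} be random variables on a common probability space with values in finite sets, and let K_0 be a constant random variable. Write X_{i:j} for the tuple (X_i,…,X_j). Assume: (i) W_1 and L_1 are constant (no secure message in the first block); (ii) for each b ∈ {1,…,B−1}, the future messages (W_{b+2:B}, L_{b+2:B}) are independent of (Z_{1:b+1}, W_{1:b+1}, L_{1:b+1}) (with the convention that this tuple of future messages is empty when b = B−1); (iii) for each b ∈ {1,…,B−1}, the Markov chain (W_{1:b}, L_{1:b}, Z_{1:b}) − K_b − (Z_{b+1}, W_{b+1}, L_{b+1}) holds; and (iv) for each b ∈ {1,…,B−1}, the Markov chain (W_{1:b−1}, L_{1:b−1}, Z_{1:b−1}) − (W_b, L_b, Z_b, K_{b−1}) − K_b holds. Then the total leakage satisfies I(W_{1:B}, L_{1:B}; Z_{1:B}) ≤ Σ_{b=1}^{B−1} [ I(W_{b+1}, L_{b+1}; Z_{b+1}) + I(W_b, L_b, Z_b, K_{b−1}; K_b) ]. (This is the aggregate block-Markov secrecy bound, equations (44)–(48), in the proof of Theorem 1, where W_b and L_b are the secure message parts, Z_b the eavesdropper observations,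 and K_b the secret key generated in block b.) -/

import Mathlib

open scoped BigOperators Classical

/-- A probability mass function on a finite type, representing a finite probability space. -/
structure FinPMF (Ω : Type*) [Fintype Ω] where
  p : Ω → ℝ
  nonneg : ∀ ω, 0 ≤ p ω
  sum_one : ∑ ω, p ω = 1

namespace FinPMF

variable {Ω : Type*} [Fintype Ω] (μ : FinPMF Ω)

/-- Probability that the random variable `X` takes the value `x`. -/
def prob {α : Type*} [DecidableEq α] (X : Ω → α) (x : α) : ℝ :=
  ∑ ω, if X ω = x then μ.p ω else 0

/-- Shannon entropy `H(X)` (with the natural logarithm as the fixed base)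
of a random variable with values in a finite set. -/
noncomputable def H {α : Type*} [Fintype α] [DecidableEq α] (X : Ω → α) : ℝ :=
  ∑ x : α, -(μ.prob X x * Real.log (μ.prob X x))

/-- Conditional Shannon entropy `H(X | Y) = H(X, Y) - H(Y)`. -/
noncomputable def condH {α β : Type*} [Fintype α] [DecidableEq α] [Fintype β] [DecidableEq β]
    (X : Ω → α) (Y : Ω → β) : ℝ :=
  μ.H (fun ω => (X ω, Y ω)) - μ.H Y

/-- Mutual information `I(X ; Y) = H(X) + H(Y) - H(X, Y)`. -/
noncomputable def mutInfo {α β : Type*} [Fintype α] [DecidableEq α] [Fintype β] [DecidableEq β]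
    (X : Ω → α) (Y : Ω → β) : ℝ :=
  μ.H X + μ.H Y - μ.H (fun ω => (X ω, Y ω))

/-- The random variables `X` and `Y` are independent. -/
def Indep {α β : Type*} [DecidableEq α] [DecidableEq β] (X : Ω → α) (Y : Ω → β) : Prop :=
  ∀ x y, μ.prob (fun ω => (X ω, Y ω)) (x, y) = μ.prob X x * μ.prob Y y

/-- Markov chain `A − B − C`: the random variables `A` and `C` are conditionally
independent given `B`, expressed multiplicatively as
`P(A=a, B=b, C=c) · P(B=b) = P(A=a, B=b) · P(B=b, C=c)`. -/
def CondIndep {α β γ : Type*} [DecidableEq α] [DecidableEq β] [DecidableEq γ]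
    (A : Ω → α) (B : Ω → β) (C : Ω → γ) : Prop :=
  ∀ a b c,
    μ.prob (fun ω => (A ω, B ω, C ω)) (a, b, c) * μ.prob B b =
      μ.prob (fun ω => (A ω, B ω)) (a, b) * μ.prob (fun ω => (B ω, C ω)) (b, c)

end FinPMF

/-!
Let `T n = I(W_{1:n}, L_{1:n}; Z_{1:n})`. With `A = (W_{1:b}, L_{1:b})`, `N = (W_{b+1}, L_{b+1})`,
`Y = Z_{1:b}` and `Z = Z_{b+1}`, expanding into entropies gives the identity
`I((A,N); (Y,Z)) = I(A;Y) + I(N;Z) + I((A,Y); (N,Z)) - I(A;N) - I(Y;Z)`, hence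
`T (b+1) ≤ T b + I(W_{b+1}, L_{b+1}; Z_{b+1}) + I(P_b; (Z_{b+1}, W_{b+1}, L_{b+1}))` with
`P_b = (W_{1:b}, L_{1:b}, Z_{1:b})`. By the Markov chain (iii) and data processing the last term
is at most `I(P_b; K_b) ≤ I((P_b, K_{b-1}); K_b)`, which equals `I(W_b, L_b, Z_b, K_{b-1}; K_b)`
by the Markov chain (iv). Summing from `T 1 = 0` (as `W 1`, `L 1` are constant) gives the bound.
The only analytic input is the submodularity of entropy, a consequence of Gibbs' inequality.
-/

lemma one_sub_mul_div_mul_le_log_sub {a b c d : ℝ} (ha : 0 < a) (hb : 0 < b) (hc : 0 < c)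
    (hd : 0 < d) :
    1 - c * d / (a * b) ≤ Real.log a + Real.log b - Real.log c - Real.log d := by
  have := Real.one_sub_inv_le_log_of_pos (div_pos (mul_pos ha hb) (mul_pos hc hd))
  rwa [inv_div, Real.log_div (by positivity) (by positivity), Real.log_mul ha.ne' hb.ne',
    Real.log_mul hc.ne' hd.ne', ← sub_sub] at this

namespace FinPMF

variable {Ω : Type*} [Fintype Ω] (μ : FinPMF Ω) {α β γ δ : Type*}

lemma prob_nonneg [DecidableEq α] (X : Ω → α) (x : α) : 0 ≤ μ.prob X x :=
  Finset.sum_nonneg fun ω _ => ite_nonneg (μ.nonneg ω) le_rfl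

lemma prob_apply_pos [DecidableEq α] (X : Ω → α) {ω : Ω} (hω : 0 < μ.p ω) :
    0 < μ.prob X (X ω) :=
  hω.trans_le <| by
    unfold prob
    simpa using Finset.single_le_sum (fun ω' _ => ite_nonneg (μ.nonneg ω') le_rfl)
      (f := fun ω' => if X ω' = X ω then μ.p ω' else 0) (Finset.mem_univ ω)

lemma sum_prob_pair_left [Fintype α] [DecidableEq α] [DecidableEq β]
    (A : Ω → α) (B : Ω → β) (b : β) :
    ∑ a, μ.prob (fun ω => (A ω, B ω)) (a, b) = μ.prob B b := by
  simp only [prob]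
  rw [Finset.sum_comm]
  simp [Prod.ext_iff, ite_and]

lemma sum_prob_pair_right [DecidableEq α] [Fintype β] [DecidableEq β]
    (A : Ω → α) (B : Ω → β) (a : α) :
    ∑ b, μ.prob (fun ω => (A ω, B ω)) (a, b) = μ.prob A a := by
  simp only [prob]
  rw [Finset.sum_comm]
  simp [Prod.ext_iff, ite_and]

variable [Fintype α] [DecidableEq α] [Fintype β] [DecidableEq β]
  [Fintype γ] [DecidableEq γ] [Fintype δ] [DecidableEq δ]

lemma sum_prob_mul (X : Ω → α) (g : α → ℝ) :
    ∑ x, μ.prob X x * g x = ∑ ω, μ.p ω * g (X ω) := by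
  simp only [prob, Finset.sum_mul]
  rw [Finset.sum_comm]
  simp

lemma sum_prob (X : Ω → α) : ∑ x, μ.prob X x = 1 := by
  simpa [μ.sum_one] using μ.sum_prob_mul X 1

lemma H_eq_sum (X : Ω → α) : μ.H X = -∑ ω, μ.p ω * Real.log (μ.prob X (X ω)) := by
  rw [H, Finset.sum_neg_distrib, μ.sum_prob_mul X fun x => Real.log (μ.prob X x)]

-- Entropy only sees the partition of `Ω` into level sets; every regrouping of tuples below
-- goes through this.
lemma H_congr {X : Ω → α} {Y : Ω → β} (h : ∀ ω ω', X ω = X ω' ↔ Y ω = Y ω') :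
    μ.H X = μ.H Y := by
  simp only [H_eq_sum, prob, h]

lemma H_eq_zero_of_const {X : Ω → α} (hX : ∀ ω ω', X ω = X ω') : μ.H X = 0 := by
  have hprob : ∀ ω, μ.prob X (X ω) = 1 := fun ω => by simp [prob, hX _ ω, μ.sum_one]
  simp [H_eq_sum, hprob]

lemma sum_prob_mul_prob_div_prob (A : Ω → α) (B : Ω → β) (C : Ω → γ) :
    ∑ t : α × β × γ, μ.prob (fun ω => (A ω, B ω)) (t.1, t.2.1)
      * μ.prob (fun ω => (B ω, C ω)) (t.2.1, t.2.2) / μ.prob B t.2.1 = 1 := by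
  simp only [Fintype.sum_prod_type]
  rw [Finset.sum_comm]
  simp only [mul_div_right_comm _ _ (μ.prob B _), ← Finset.mul_sum, ← Finset.sum_mul,
    ← Finset.sum_div, sum_prob_pair_left, sum_prob_pair_right, div_self_mul_self, sum_prob]

lemma H_submodular (A : Ω → α) (B : Ω → β) (C : Ω → γ) :
    μ.H (fun ω => (A ω, B ω, C ω)) + μ.H B
      ≤ μ.H (fun ω => (A ω, B ω)) + μ.H (fun ω => (B ω, C ω)) := by
  -- Gibbs' inequality against `p_{AB} p_{BC} / p_B`, a measure of total mass `1`.
  let g : α × β × γ → ℝ := fun t => μ.prob (fun ω => (A ω, B ω)) (t.1, t.2.1)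
    * μ.prob (fun ω => (B ω, C ω)) (t.2.1, t.2.2)
    / (μ.prob (fun ω => (A ω, B ω, C ω)) t * μ.prob B t.2.1)
  have hterm : ∀ ω, μ.p ω * (1 - g (A ω, B ω, C ω))
      ≤ μ.p ω * (Real.log (μ.prob (fun ω => (A ω, B ω, C ω)) (A ω, B ω, C ω))
        + Real.log (μ.prob B (B ω)) - Real.log (μ.prob (fun ω => (A ω, B ω)) (A ω, B ω))
        - Real.log (μ.prob (fun ω => (B ω, C ω)) (B ω, C ω))) := by
    intro ω
    rcases (μ.nonneg ω).eq_or_lt with hω | hω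
    · simp [← hω]
    exact mul_le_mul_of_nonneg_left (one_sub_mul_div_mul_le_log_sub (μ.prob_apply_pos _ hω)
      (μ.prob_apply_pos _ hω) (μ.prob_apply_pos _ hω) (μ.prob_apply_pos _ hω)) hω.le
  have hsum : ∑ ω, μ.p ω * g (A ω, B ω, C ω) ≤ 1 := by
    rw [← μ.sum_prob_mul (fun ω => (A ω, B ω, C ω)), ← μ.sum_prob_mul_prob_div_prob A B C]
    refine Finset.sum_le_sum fun t _ => ?_
    rcases (μ.prob_nonneg _ t).eq_or_lt with ht | ht
    · rw [← ht, zero_mul]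
      exact div_nonneg (mul_nonneg (μ.prob_nonneg _ _) (μ.prob_nonneg _ _)) (μ.prob_nonneg _ _)
    · exact (mul_div_assoc' _ _ _).trans_le (mul_div_mul_left _ _ ht.ne').le
  have := Finset.sum_le_sum fun ω (_ : ω ∈ Finset.univ) => hterm ω
  simp only [mul_sub, mul_add, mul_one, Finset.sum_sub_distrib, Finset.sum_add_distrib,
    μ.sum_one] at this
  simp only [H_eq_sum]
  linarith

lemma CondIndep.H_add_H {A : Ω → α} {B : Ω → β} {C : Ω → γ} (h : μ.CondIndep A B C) :
    μ.H (fun ω => (A ω, B ω, C ω)) + μ.H B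
      = μ.H (fun ω => (A ω, B ω)) + μ.H (fun ω => (B ω, C ω)) := by
  simp only [H_eq_sum, ← neg_add, neg_inj, ← Finset.sum_add_distrib]
  refine Finset.sum_congr rfl fun ω _ => ?_
  rcases (μ.nonneg ω).eq_or_lt with hω | hω
  · simp [← hω]
  rw [← mul_add, ← mul_add, ← Real.log_mul (μ.prob_apply_pos _ hω).ne' (μ.prob_apply_pos _ hω).ne',
    ← Real.log_mul (μ.prob_apply_pos _ hω).ne' (μ.prob_apply_pos _ hω).ne', h]

lemma mutInfo_congr {X : Ω → α} {X' : Ω → β} {Y : Ω → γ} {Y' : Ω → δ}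
    (hX : ∀ ω ω', X ω = X ω' ↔ X' ω = X' ω') (hY : ∀ ω ω', Y ω = Y ω' ↔ Y' ω = Y' ω') :
    μ.mutInfo X Y = μ.mutInfo X' Y' := by
  simp only [mutInfo, μ.H_congr hX, μ.H_congr hY,
    μ.H_congr (X := fun ω => (X ω, Y ω)) (Y := fun ω => (X' ω, Y' ω)) fun ω ω' => by
      simp only [Prod.mk.injEq, hX, hY]]

lemma mutInfo_comm (X : Ω → α) (Y : Ω → β) : μ.mutInfo X Y = μ.mutInfo Y X := by
  simp only [mutInfo, μ.H_congr (X := fun ω => (X ω, Y ω)) (Y := fun ω => (Y ω, X ω)) fun ω ω' => by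
    simp only [Prod.mk.injEq, and_comm]]
  ring

lemma mutInfo_eq_zero_of_const_left {X : Ω → α} (hX : ∀ ω ω', X ω = X ω') (Y : Ω → β) :
    μ.mutInfo X Y = 0 := by
  simp only [mutInfo, μ.H_eq_zero_of_const hX, μ.H_congr (X := fun ω => (X ω, Y ω)) (Y := Y)
    fun ω ω' => by simp only [Prod.mk.injEq, hX ω ω', true_and]]
  ring

lemma mutInfo_le_mutInfo_pair_right (A : Ω → α) (B : Ω → β) (C : Ω → γ) :
    μ.mutInfo A C ≤ μ.mutInfo A (fun ω => (B ω, C ω)) := by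
  have := μ.H_submodular A C B
  simp only [mutInfo]
  rw [μ.H_congr (X := fun ω => (C ω, B ω)) (Y := fun ω => (B ω, C ω)) fun ω ω' => by
      simp only [Prod.mk.injEq, and_comm],
    μ.H_congr (X := fun ω => (A ω, C ω, B ω)) (Y := fun ω => (A ω, B ω, C ω)) fun ω ω' => by
      simp only [Prod.mk.injEq, and_comm]] at this
  linarith

lemma mutInfo_le_mutInfo_pair_left (A : Ω → α) (B : Ω → β) (C : Ω → γ) :
    μ.mutInfo A C ≤ μ.mutInfo (fun ω => (B ω, A ω)) C := by
  rw [mutInfo_comm, μ.mutInfo_comm _ C]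
  exact μ.mutInfo_le_mutInfo_pair_right C B A

lemma mutInfo_nonneg (X : Ω → α) (Y : Ω → β) : 0 ≤ μ.mutInfo X Y := by
  have := μ.mutInfo_le_mutInfo_pair_right X Y (fun _ => ())
  rwa [mutInfo_comm, mutInfo_eq_zero_of_const_left _ (fun _ _ => rfl),
    μ.mutInfo_congr (X' := X) (Y' := Y) (fun _ _ => Iff.rfl) fun ω ω' => by
      simp only [Prod.mk.injEq, and_true]] at this

lemma CondIndep.mutInfo_pair_right_eq {A : Ω → α} {B : Ω → β} {C : Ω → γ}
    (h : μ.CondIndep A B C) : μ.mutInfo A (fun ω => (B ω, C ω)) = μ.mutInfo A B := by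
  have := h.H_add_H
  simp only [mutInfo]
  linarith

lemma CondIndep.mutInfo_left_eq {A : Ω → α} {B : Ω → β} {C : Ω → γ} {X : Ω → δ}
    (h : μ.CondIndep A B C) (hX : ∀ ω ω', X ω = X ω' ↔ A ω = A ω' ∧ B ω = B ω') :
    μ.mutInfo X C = μ.mutInfo B C := by
  have := h.H_add_H
  rw [μ.mutInfo_congr (X' := fun ω => (A ω, B ω)) (Y' := C) (by simpa only [Prod.mk.injEq])
    fun _ _ => Iff.rfl]
  simp only [mutInfo]
  rw [μ.H_congr (X := fun ω => ((A ω, B ω), C ω)) (Y := fun ω => (A ω, B ω, C ω)) fun ω ω' => by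
    simp only [Prod.mk.injEq, and_assoc]]
  linarith

lemma CondIndep.mutInfo_le {A : Ω → α} {B : Ω → β} {C : Ω → γ} (h : μ.CondIndep A B C) :
    μ.mutInfo A C ≤ μ.mutInfo A B :=
  h.mutInfo_pair_right_eq ▸ μ.mutInfo_le_mutInfo_pair_right A B C

lemma mutInfo_pair_pair_le (A : Ω → α) (N : Ω → β) (Y : Ω → γ) (Z : Ω → δ) :
    μ.mutInfo (fun ω => (A ω, N ω)) (fun ω => (Y ω, Z ω))
      ≤ μ.mutInfo A Y + μ.mutInfo N Z
        + μ.mutInfo (fun ω => (A ω, Y ω)) (fun ω => (N ω, Z ω)) := by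
  have hAN := μ.mutInfo_nonneg A N
  have hYZ := μ.mutInfo_nonneg Y Z
  simp only [mutInfo] at *
  rw [μ.H_congr (X := fun ω => ((A ω, N ω), (Y ω, Z ω)))
    (Y := fun ω => ((A ω, Y ω), (N ω, Z ω))) fun ω ω' => by
      simp only [Prod.mk.injEq]; tauto]
  linarith

end FinPMF

theorem le_sum_Icc_of_le_add {T f : ℕ → ℝ} (h0 : T 0 ≤ 0) (h1 : T 1 ≤ 0) :
    ∀ {B : ℕ}, (∀ b ∈ Finset.Icc 1 (B - 1), T (b + 1) ≤ T b + f b) →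
      T B ≤ ∑ b ∈ Finset.Icc 1 (B - 1), f b
  | 0, _ => by simpa using h0
  | 1, _ => by simpa using h1
  | n + 2, h => by
    have ih := le_sum_Icc_of_le_add h0 h1 (B := n + 1) fun b hb =>
      h b (Finset.Icc_subset_Icc_right (by omega) hb)
    rw [show n + 2 - 1 = n + 1 by omega, Finset.sum_Icc_succ_top (by omega)]
    rw [Nat.add_sub_cancel] at ih
    linarith [h (n + 1) (by simp)]

def prefixTuple {Ω : Type*} {τ : ℕ → Type*} (V : ∀ i, Ω → τ i) (n : ℕ) (ω : Ω) :
    ∀ t : Fin n, τ (1 + t.val) :=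
  fun t => V (1 + t.val) ω

section prefixTuple

variable {Ω : Type*} {τ : ℕ → Type*} (V : ∀ i, Ω → τ i)

lemma prefixTuple_zero_eq (ω ω' : Ω) : prefixTuple V 0 ω = prefixTuple V 0 ω' :=
  funext fun t => t.elim0

lemma prefixTuple_succ_eq_iff (n : ℕ) (ω ω' : Ω) :
    prefixTuple V (n + 1) ω = prefixTuple V (n + 1) ω'
      ↔ prefixTuple V n ω = prefixTuple V n ω' ∧ V (n + 1) ω = V (n + 1) ω' := by
  simp only [funext_iff, Fin.forall_fin_succ', prefixTuple, Fin.val_castSucc, Fin.val_last]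
  rw [Nat.add_comm 1 n]

end prefixTuple

namespace FinPMF

variable {Ω : Type*} [Fintype Ω] (μ : FinPMF Ω) {𝒲 𝓛 𝒵 𝒦 : ℕ → Type*}
  [∀ b, Fintype (𝒲 b)] [∀ b, DecidableEq (𝒲 b)] [∀ b, Fintype (𝓛 b)] [∀ b, DecidableEq (𝓛 b)]
  [∀ b, Fintype (𝒵 b)] [∀ b, DecidableEq (𝒵 b)] [∀ b, Fintype (𝒦 b)] [∀ b, DecidableEq (𝒦 b)]
  (W : ∀ b, Ω → 𝒲 b) (L : ∀ b, Ω → 𝓛 b) (Z : ∀ b, Ω → 𝒵 b) (K : ∀ b, Ω → 𝒦 b)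

lemma leakage_succ_le (b : ℕ)
    (hkey : μ.CondIndep (fun ω => (prefixTuple W b ω, prefixTuple L b ω, prefixTuple Z b ω))
      (K b) (fun ω => (Z (b + 1) ω, W (b + 1) ω, L (b + 1) ω))) :
    μ.mutInfo (fun ω => (prefixTuple W (b + 1) ω, prefixTuple L (b + 1) ω))
        (prefixTuple Z (b + 1))
      ≤ μ.mutInfo (fun ω => (prefixTuple W b ω, prefixTuple L b ω)) (prefixTuple Z b)
        + μ.mutInfo (fun ω => (W (b + 1) ω, L (b + 1) ω)) (Z (b + 1))
        + μ.mutInfo (fun ω => (prefixTuple W b ω, prefixTuple L b ω, prefixTuple Z b ω)) (K b) :=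
  calc _ = μ.mutInfo
          (fun ω => ((prefixTuple W b ω, prefixTuple L b ω), (W (b + 1) ω, L (b + 1) ω)))
          (fun ω => (prefixTuple Z b ω, Z (b + 1) ω)) :=
        μ.mutInfo_congr
          (fun ω ω' => by simp only [Prod.mk.injEq, prefixTuple_succ_eq_iff]; tauto)
          (fun ω ω' => by rw [Prod.mk.injEq, prefixTuple_succ_eq_iff])
    _ ≤ _ := μ.mutInfo_pair_pair_le (fun ω => (prefixTuple W b ω, prefixTuple L b ω))
          (fun ω => (W (b + 1) ω, L (b + 1) ω)) (prefixTuple Z b) (Z (b + 1))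
    _ = _ + _ + μ.mutInfo (fun ω => (prefixTuple W b ω, prefixTuple L b ω, prefixTuple Z b ω))
            (fun ω => (Z (b + 1) ω, W (b + 1) ω, L (b + 1) ω)) := by
      congr 1
      exact μ.mutInfo_congr (fun ω ω' => by simp only [Prod.mk.injEq]; tauto)
        (fun ω ω' => by simp only [Prod.mk.injEq]; tauto)
    _ ≤ _ := by grw [hkey.mutInfo_le]

lemma mutInfo_prefixTuple_le_mutInfo_key (c : ℕ)
    (hkey' : μ.CondIndep (fun ω => (prefixTuple W c ω, prefixTuple L c ω, prefixTuple Z c ω))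
      (fun ω => (W (c + 1) ω, L (c + 1) ω, Z (c + 1) ω, K c ω)) (K (c + 1))) :
    μ.mutInfo (fun ω => (prefixTuple W (c + 1) ω, prefixTuple L (c + 1) ω,
        prefixTuple Z (c + 1) ω)) (K (c + 1))
      ≤ μ.mutInfo (fun ω => (W (c + 1) ω, L (c + 1) ω, Z (c + 1) ω, K c ω)) (K (c + 1)) := by
  refine (μ.mutInfo_le_mutInfo_pair_left _ (K c) _).trans_eq
    (CondIndep.mutInfo_left_eq μ hkey' ?_)
  intro ω ω'
  simp only [Prod.mk.injEq, prefixTuple_succ_eq_iff]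
  tauto

end FinPMF

theorem stmt_11_general {Ω : Type*} [Fintype Ω]
    {𝒲 𝓛 𝒵 𝒦 : ℕ → Type*}
    [∀ b, Fintype (𝒲 b)] [∀ b, DecidableEq (𝒲 b)]
    [∀ b, Fintype (𝓛 b)] [∀ b, DecidableEq (𝓛 b)]
    [∀ b, Fintype (𝒵 b)] [∀ b, DecidableEq (𝒵 b)]
    [∀ b, Fintype (𝒦 b)] [∀ b, DecidableEq (𝒦 b)]
    {B : ℕ}
    (μ : FinPMF Ω)
    (W : ∀ b, Ω → 𝒲 b) (L : ∀ b, Ω → 𝓛 b) (Z : ∀ b, Ω → 𝒵 b) (K : ∀ b, Ω → 𝒦 b)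
    -- (i) no secure message in the first block: `W 1` and `L 1` are constant
    (hW1 : ∀ ω ω', W 1 ω = W 1 ω') (hL1 : ∀ ω ω', L 1 ω = L 1 ω')
    -- (iii) Markov chain `(W_{1:b}, L_{1:b}, Z_{1:b}) − K_b − (Z_{b+1}, W_{b+1}, L_{b+1})`
    (hkey : ∀ b ∈ Finset.Icc 1 (B - 1),
      μ.CondIndep
        (fun ω =>
          ((fun t : Fin b => W (1 + t.val) ω),
           (fun t : Fin b => L (1 + t.val) ω),
           (fun t : Fin b => Z (1 + t.val) ω)))
        (K b)
        (fun ω => (Z (b + 1) ω, W (b + 1) ω, L (b + 1) ω)))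
    -- (iv) Markov chain `(W_{1:b−1}, L_{1:b−1}, Z_{1:b−1}) − (W_b, L_b, Z_b, K_{b−1}) − K_b`
    (hkey' : ∀ b ∈ Finset.Icc 1 (B - 1),
      μ.CondIndep
        (fun ω =>
          ((fun t : Fin (b - 1) => W (1 + t.val) ω),
           (fun t : Fin (b - 1) => L (1 + t.val) ω),
           (fun t : Fin (b - 1) => Z (1 + t.val) ω)))
        (fun ω => (W b ω, L b ω, Z b ω, K (b - 1) ω))
        (K b)) :
    μ.mutInfo
        (fun ω =>
          ((fun t : Fin B => W (1 + t.val) ω),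
           (fun t : Fin B => L (1 + t.val) ω)))
        (fun ω => (fun t : Fin B => Z (1 + t.val) ω))
      ≤ ∑ b ∈ Finset.Icc 1 (B - 1),
          (μ.mutInfo (fun ω => (W (b + 1) ω, L (b + 1) ω)) (Z (b + 1))
            + μ.mutInfo (fun ω => (W b ω, L b ω, Z b ω, K (b - 1) ω)) (K b)) := by
  refine le_sum_Icc_of_le_add
    (T := fun n => μ.mutInfo (fun ω => (prefixTuple W n ω, prefixTuple L n ω)) (prefixTuple Z n))
    (μ.mutInfo_eq_zero_of_const_left (fun ω ω' => ?_) _).le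
    (μ.mutInfo_eq_zero_of_const_left (fun ω ω' => ?_) _).le fun b hb => ?_
  · exact Prod.ext (prefixTuple_zero_eq W ω ω') (prefixTuple_zero_eq L ω ω')
  · exact Prod.ext ((prefixTuple_succ_eq_iff W 0 ω ω').2 ⟨prefixTuple_zero_eq W ω ω', hW1 ω ω'⟩)
      ((prefixTuple_succ_eq_iff L 0 ω ω').2 ⟨prefixTuple_zero_eq L ω ω', hL1 ω ω'⟩)
  · obtain ⟨c, rfl⟩ : ∃ c, b = c + 1 := ⟨b - 1, by simp only [Finset.mem_Icc] at hb; omega⟩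
    have hleak := μ.leakage_succ_le W L Z K (c + 1) (hkey _ hb)
    have hprefix := μ.mutInfo_prefixTuple_le_mutInfo_key W L Z K c (hkey' _ hb)
    -- `K (c + 1 - 1)` is `K c` only up to defeq: the type of `K` depends on the index
    show _ ≤ _ + (_ + μ.mutInfo (fun ω => (W (c + 1) ω, L (c + 1) ω, Z (c + 1) ω, K c ω))
      (K (c + 1)))
    linarith

/-- Aggregate block-Markov secrecy bound. Blocks are indexed by `b ∈ {1,…,B}`
(index `0` is reserved for the constant initial key `K 0`). Tuples `X_{i:j}` are encoded as
functions `fun t : Fin (j+1-i) => X (i+t)`. Under the stated independence/Markov assumptions,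
`I(W_{1:B}, L_{1:B}; Z_{1:B})
  ≤ Σ_{b=1}^{B−1} [I(W_{b+1}, L_{b+1}; Z_{b+1}) + I(W_b, L_b, Z_b, K_{b−1}; K_b)]`. -/
theorem stmt_11 {Ω : Type*} [Fintype Ω]
    {𝒲 𝓛 𝒵 𝒦 : ℕ → Type*}
    [∀ b, Fintype (𝒲 b)] [∀ b, DecidableEq (𝒲 b)]
    [∀ b, Fintype (𝓛 b)] [∀ b, DecidableEq (𝓛 b)]
    [∀ b, Fintype (𝒵 b)] [∀ b, DecidableEq (𝒵 b)]
    [∀ b, Fintype (𝒦 b)] [∀ b, DecidableEq (𝒦 b)]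
    {B : ℕ} (hB : 2 ≤ B)
    (μ : FinPMF Ω)
    (W : ∀ b, Ω → 𝒲 b) (L : ∀ b, Ω → 𝓛 b) (Z : ∀ b, Ω → 𝒵 b) (K : ∀ b, Ω → 𝒦 b)
    -- `K 0` is a constant random variable
    (hK0 : ∀ ω ω', K 0 ω = K 0 ω')
    -- (i) no secure message in the first block: `W 1` and `L 1` are constant
    (hW1 : ∀ ω ω', W 1 ω = W 1 ω') (hL1 : ∀ ω ω', L 1 ω = L 1 ω')
    -- (ii) future messages `(W_{b+2:B}, L_{b+2:B})` are independent of
    -- `(Z_{1:b+1}, W_{1:b+1}, L_{1:b+1})`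
    (hfut : ∀ b ∈ Finset.Icc 1 (B - 1),
      μ.Indep
        (fun ω =>
          ((fun t : Fin (B + 1 - (b + 2)) => W (b + 2 + t.val) ω),
           (fun t : Fin (B + 1 - (b + 2)) => L (b + 2 + t.val) ω)))
        (fun ω =>
          ((fun t : Fin (b + 1) => Z (1 + t.val) ω),
           (fun t : Fin (b + 1) => W (1 + t.val) ω),
           (fun t : Fin (b + 1) => L (1 + t.val) ω))))
    -- (iii) Markov chain `(W_{1:b}, L_{1:b}, Z_{1:b}) − K_b − (Z_{b+1}, W_{b+1}, L_{b+1})`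
    (hkey : ∀ b ∈ Finset.Icc 1 (B - 1),
      μ.CondIndep
        (fun ω =>
          ((fun t : Fin b => W (1 + t.val) ω),
           (fun t : Fin b => L (1 + t.val) ω),
           (fun t : Fin b => Z (1 + t.val) ω)))
        (K b)
        (fun ω => (Z (b + 1) ω, W (b + 1) ω, L (b + 1) ω)))
    -- (iv) Markov chain `(W_{1:b−1}, L_{1:b−1}, Z_{1:b−1}) − (W_b, L_b, Z_b, K_{b−1}) − K_b`
    (hkey' : ∀ b ∈ Finset.Icc 1 (B - 1),
      μ.CondIndep
        (fun ω =>
          ((fun t : Fin (b - 1) => W (1 + t.val) ω),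
           (fun t : Fin (b - 1) => L (1 + t.val) ω),
           (fun t : Fin (b - 1) => Z (1 + t.val) ω)))
        (fun ω => (W b ω, L b ω, Z b ω, K (b - 1) ω))
        (K b)) :
    μ.mutInfo
        (fun ω =>
          ((fun t : Fin B => W (1 + t.val) ω),
           (fun t : Fin B => L (1 + t.val) ω)))
        (fun ω => (fun t : Fin B => Z (1 + t.val) ω))
      ≤ ∑ b ∈ Finset.Icc 1 (B - 1),
          (μ.mutInfo (fun ω => (W (b + 1) ω, L (b + 1) ω)) (Z (b + 1))
            + μ.mutInfo (fun ω => (W b ω, L b ω, Z b ω, K (b - 1) ω)) (K b)) :=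
  stmt_11_general μ W L Z K hW1 hL1 hkey hkey'
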